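/- One-step cost comparison identity: for the complete-tree cost c(y^n) = E((n−S)^+ | Y^n=y^n) + λP(S>n | Y^n=y^n), one has E(c(Y^{n+1}) | Y^n) = c(Y^n) + P(S ≤ n | Y^n) − λP(S = n+1 | Y^n); hence E(c(Y^{n+1})|Y^n) ≥ c(Y^n) if and only if P(S ≤ n | Y^n) ≥ λ P(S = n+1 | Y^n). -/
import Mathlib


open Finset
open scoped Classical

noncomputable section

variable {Ω : Type*} [Fintype Ω] {𝒳 : Type*} {𝒴 : Type*}

/-- Probability of an event under weights `p` on a finite sample space. -/
def prW (p : Ω → ℝ) (A : Ω → Prop) : ℝ := ∑ ω, if A ω then p ω else 0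

/-- Expectation under weights `p`. -/
def exW (p : Ω → ℝ) (f : Ω → ℝ) : ℝ := ∑ ω, p ω * f ω

/-- `p` is a probability weight function. -/
def IsProbW (p : Ω → ℝ) : Prop := (∀ ω, 0 ≤ p ω) ∧ ∑ ω, p ω = 1

/-- Conditional probability `P(A | B)`. -/
def cprW (p : Ω → ℝ) (A B : Ω → Prop) : ℝ := prW p (fun ω => A ω ∧ B ω) / prW p B

/-- Conditional expectation `E(f | B)`. -/
def cexW (p : Ω → ℝ) (f : Ω → ℝ) (B : Ω → Prop) : ℝ :=
  (∑ ω, if B ω then p ω * f ω else 0) / prW p B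

/-- positive part of a real number -/
def posP (x : ℝ) : ℝ := max x 0

/-- `S` is a (non-randomized) stopping time w.r.t. the process `X` (time starts at 1):
its value is determined by the observations up to itself. -/
def IsSTW (X : ℕ → Ω → 𝒳) (S : Ω → ℕ) : Prop :=
  ∀ ω ω', (∀ i, 1 ≤ i → i ≤ S ω → X i ω = X i ω') → S ω' = S ω

/-- The path of the process `Y` at sample `ω`. -/
def pathOf (Y : ℕ → Ω → 𝒴) (ω : Ω) : ℕ → 𝒴 := fun i => Y i ω

/-- The path `f` extends (passes through) the node `y` (a finite string). -/
def ExtN (y : List 𝒴) (f : ℕ → 𝒴) : Prop := ∀ i : Fin y.length, f (i.1 + 1) = y.get i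

/-- A stopping function on paths: its value depends only on the path up to that value.
This is the path-representation of a non-randomized stopping time (a tree). -/
def IsStopFun (t : (ℕ → 𝒴) → ℕ) : Prop :=
  ∀ f g, (∀ i, 1 ≤ i → i ≤ t f → f i = g i) → t g = t f

/-- `y` is an internal node of the tree `t`. -/
def InternalNode (t : (ℕ → 𝒴) → ℕ) (y : List 𝒴) : Prop :=
  ∀ f, ExtN y f → y.length < t f

/-- `u` is (the stopping function of) a subtree rooted at node `y`. -/
def IsSubtreeAt (y : List 𝒴) (u : (ℕ → 𝒴) → ℕ) : Prop :=
  IsStopFun u ∧ ∀ f, ExtN y f → y.length ≤ u f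

/-- false-alarm weight `a(y)` of node `y` -/
def aW (p : Ω → ℝ) (Y : ℕ → Ω → 𝒴) (S : Ω → ℕ) (y : List 𝒴) : ℝ :=
  prW p (fun ω => ExtN y (pathOf Y ω) ∧ y.length < S ω)

/-- delay weight `b(y)` of node `y` -/
def bW (p : Ω → ℝ) (Y : ℕ → Ω → 𝒴) (S : Ω → ℕ) (y : List 𝒴) : ℝ :=
  exW p (fun ω => if ExtN y (pathOf Y ω) then posP ((y.length : ℝ) - (S ω : ℝ)) else 0)

/-- false-alarm weight `a(T_y)` of a subtree `u` rooted at `y` (the sum of `a(γ)`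
over its leaves `γ`). -/
def aSubW (p : Ω → ℝ) (Y : ℕ → Ω → 𝒴) (S : Ω → ℕ) (y : List 𝒴) (u : (ℕ → 𝒴) → ℕ) : ℝ :=
  prW p (fun ω => ExtN y (pathOf Y ω) ∧ u (pathOf Y ω) < S ω)

/-- delay weight `b(T_y)` of a subtree `u` rooted at `y` (the sum of `b(γ)` over its leaves). -/
def bSubW (p : Ω → ℝ) (Y : ℕ → Ω → 𝒴) (S : Ω → ℕ) (y : List 𝒴) (u : (ℕ → 𝒴) → ℕ) : ℝ :=
  exW p (fun ω => if ExtN y (pathOf Y ω) then posP ((u (pathOf Y ω) : ℝ) - (S ω : ℝ)) else 0)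

/-- Lagrangian cost `J_λ(T_y)` of the subtree `u` rooted at `y`. -/
def JsubW (p : Ω → ℝ) (Y : ℕ → Ω → 𝒴) (S : Ω → ℕ) (lam : ℝ) (y : List 𝒴)
    (u : (ℕ → 𝒴) → ℕ) : ℝ :=
  bSubW p Y S y u + lam * aSubW p Y S y u

/-- Lagrangian cost `J_λ(y)` of the single node `y`. -/
def JnodeW (p : Ω → ℝ) (Y : ℕ → Ω → 𝒴) (S : Ω → ℕ) (lam : ℝ) (y : List 𝒴) : ℝ :=
  bW p Y S y + lam * aW p Y S y

/-- `u` is the smallest minimal-cost rooted subtree `T_y(λ)` of `t` at node `y`,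
for Lagrange multiplier `lam`. -/
def IsOptSubtreeAt (p : Ω → ℝ) (Y : ℕ → Ω → 𝒴) (S : Ω → ℕ) (lam : ℝ)
    (t : (ℕ → 𝒴) → ℕ) (y : List 𝒴) (u : (ℕ → 𝒴) → ℕ) : Prop :=
  IsSubtreeAt y u ∧ (∀ f, ExtN y f → u f ≤ t f) ∧
  (∀ v, IsSubtreeAt y v → (∀ f, ExtN y f → v f ≤ t f) →
    JsubW p Y S lam y u ≤ JsubW p Y S lam y v) ∧
  (∀ v, IsSubtreeAt y v → (∀ f, ExtN y f → v f ≤ t f) →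
    JsubW p Y S lam y v = JsubW p Y S lam y u → ∀ f, ExtN y f → u f ≤ v f)

/-- the tradeoff quantity `g(y, T) = (b(T_y) - b(y)) / (a(y) - a(T_y))`
(with the convention 0/0 = 0, which holds automatically for real division). -/
def gW (p : Ω → ℝ) (Y : ℕ → Ω → 𝒴) (S : Ω → ℕ) (t : (ℕ → 𝒴) → ℕ) (y : List 𝒴) : ℝ :=
  (bSubW p Y S y t - bW p Y S y) / (aW p Y S y - aSubW p Y S y t)

/-- node permuted by a coordinate permutation -/
def permNode (y : List 𝒴) (π : Equiv.Perm (Fin y.length)) : List 𝒴 :=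
  List.ofFn fun i => y.get (π i)

/-- permutation invariance of a stopping time w.r.t. process `Y`:
`P(T ≤ n | Y^n = y^n) = P(T ≤ n | Y^n = π(y^n))`. -/
def PermInvST (p : Ω → ℝ) (Y : ℕ → Ω → 𝒴) (T : Ω → ℕ) (κ : ℕ) : Prop :=
  ∀ y : List 𝒴, y.length ≤ κ → ∀ π : Equiv.Perm (Fin y.length),
    cprW p (fun ω => T ω ≤ y.length) (fun ω => ExtN y (pathOf Y ω)) =
    cprW p (fun ω => T ω ≤ y.length) (fun ω => ExtN (permNode y π) (pathOf Y ω))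

/-- the pairs `(X_i, Y_i)` are i.i.d. (over the first `κ` time steps). -/
def IIDPairs [Fintype 𝒳] [Fintype 𝒴] (p : Ω → ℝ) (X : ℕ → Ω → 𝒳) (Y : ℕ → Ω → 𝒴)
    (κ : ℕ) : Prop :=
  ∃ μ : 𝒳 × 𝒴 → ℝ, (∀ z, 0 ≤ μ z) ∧ (∑ z, μ z = 1) ∧
    ∀ (x : ℕ → 𝒳) (yf : ℕ → 𝒴),
      prW p (fun ω => ∀ i, 1 ≤ i → i ≤ κ → X i ω = x i ∧ Y i ω = yf i) =
        ∏ i ∈ Finset.Icc 1 κ, μ (x i, yf i)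

/-- a randomized stopping time bounded by `κ`, given by its conditional stopping
kernel `q n y^n = P(T = n | Y^n = y^n)`. -/
def IsRandST (q : ℕ → (ℕ → 𝒴) → ℝ) (κ : ℕ) : Prop :=
  (∀ n f, 0 ≤ q n f) ∧
  (∀ n f g, (∀ i, 1 ≤ i → i ≤ n → f i = g i) → q n g = q n f) ∧
  (∀ f, ∑ n ∈ Finset.Icc 1 κ, q n f = 1)

/-- false-alarm probability `P(T < S)` of a randomized stopping time -/
def faR (p : Ω → ℝ) (Y : ℕ → Ω → 𝒴) (S : Ω → ℕ) (κ : ℕ) (q : ℕ → (ℕ → 𝒴) → ℝ) : ℝ :=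
  exW p (fun ω => ∑ n ∈ Finset.Icc 1 κ, q n (pathOf Y ω) * (if n < S ω then 1 else 0))

/-- expected reaction delay `E(T - S)⁺` of a randomized stopping time -/
def delayR (p : Ω → ℝ) (Y : ℕ → Ω → 𝒴) (S : Ω → ℕ) (κ : ℕ) (q : ℕ → (ℕ → 𝒴) → ℝ) : ℝ :=
  exW p (fun ω => ∑ n ∈ Finset.Icc 1 κ, q n (pathOf Y ω) * posP ((n : ℝ) - (S ω : ℝ)))

/-- the optimal tradeoff curve `d(α)` -/
def dW (p : Ω → ℝ) (Y : ℕ → Ω → 𝒴) (S : Ω → ℕ) (κ : ℕ) (α : ℝ) : ℝ :=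
  sInf {v | ∃ q, IsRandST q κ ∧ faR p Y S κ q ≤ α ∧ v = delayR p Y S κ q}

/-- the stopping kernel of a non-randomized stopping function -/
def detKer (t : (ℕ → 𝒴) → ℕ) : ℕ → (ℕ → 𝒴) → ℝ := fun n f => if t f = n then 1 else 0

/-- prefix of length `n` of a path (the node of depth `n` it visits) -/
def prefixOf (f : ℕ → 𝒴) (n : ℕ) : List 𝒴 := (List.range n).map fun i => f (i + 1)

/-- the one-step-lookahead node cost `c(y^n)` -/
def cnodeW (p : Ω → ℝ) (Y : ℕ → Ω → 𝒴) (S : Ω → ℕ) (lam : ℝ) (y : List 𝒴) : ℝ :=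
  cexW p (fun ω => posP ((y.length : ℝ) - (S ω : ℝ))) (fun ω => ExtN y (pathOf Y ω)) +
    lam * cprW p (fun ω => y.length < S ω) (fun ω => ExtN y (pathOf Y ω))

end


section Helpers

variable {Ω : Type*} [Fintype Ω] {𝒴 : Type*}

lemma extN_append {𝒴 : Type*} (y : List 𝒴) (γ : 𝒴) (f : ℕ → 𝒴) :
    ExtN (y ++ [γ]) f ↔ ExtN y f ∧ f (y.length + 1) = γ := by
  constructor
  · intro h
    refine ⟨fun i => ?_, ?_⟩
    · have := h ⟨i.1, by simp⟩
      simpa [List.get_eq_getElem, List.getElem_append, i.2] using this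
    · have := h ⟨y.length, by simp⟩
      simpa [List.get_eq_getElem, List.getElem_append] using this
  · rintro ⟨h1, h2⟩ i
    rcases lt_or_ge i.1 y.length with hi | hi
    · have := h1 ⟨i.1, hi⟩
      simpa [List.get_eq_getElem, List.getElem_append, hi] using this
    · have hie : i.1 = y.length := by have := i.2; simp at this; omega
      simp [List.get_eq_getElem, List.getElem_append, hie, h2]

lemma prW_congr (p : Ω → ℝ) (A A' : Ω → Prop) (h : ∀ ω, A ω ↔ A' ω) :
    prW p A = prW p A' := by
  unfold prW
  exact Finset.sum_congr rfl fun ω _ => by rw [if_congr (h ω) rfl rfl]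

lemma prW_zero_on (p : Ω → ℝ) (hp : ∀ ω, 0 ≤ p ω) (B : Ω → Prop)
    (h : prW p B = 0) : ∀ ω, B ω → p ω = 0 := by
  intro ω hB
  have h0 : ∀ x ∈ Finset.univ, (0:ℝ) ≤ (if B x then p x else 0) := by
    intro x _; split <;> simp [hp x]
  have := (Finset.sum_eq_zero_iff_of_nonneg h0).1 h ω (Finset.mem_univ ω)
  simpa [hB] using this

lemma sum_children {𝒴 : Type*} [Fintype 𝒴] (Y : ℕ → Ω → 𝒴)
    (y : List 𝒴) (g : Ω → ℝ) :
    ∑ γ : 𝒴, ∑ ω, (if ExtN (y ++ [γ]) (pathOf Y ω) then g ω else 0) =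
      ∑ ω, if ExtN y (pathOf Y ω) then g ω else 0 := by
  rw [Finset.sum_comm]
  refine Finset.sum_congr rfl fun ω _ => ?_
  simp only [extN_append]
  rcases Classical.em (ExtN y (pathOf Y ω)) with h | h
  · simp [h]
  · simp [h]

end Helpers

/-- one-step cost comparison identity:
`E(c(Y^{n+1}) | Y^n = y^n) = c(y^n) + P(S ≤ n | Y^n=y^n) - λ P(S = n+1 | Y^n=y^n)`,
hence `E(c(Y^{n+1})|Y^n) ≥ c(Y^n)` iff `P(S ≤ n | Y^n) ≥ λ P(S = n+1 | Y^n)`. -/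
theorem one_step_cost_identity
    {Ω 𝒳 𝒴 : Type*} [Fintype Ω] [Fintype 𝒳] [Fintype 𝒴]
    (p : Ω → ℝ) (hp : IsProbW p) (X : ℕ → Ω → 𝒳) (Y : ℕ → Ω → 𝒴) (κ : ℕ)
    (hiid : IIDPairs p X Y κ)
    (S : Ω → ℕ) (hS : IsSTW X S) (hSb : ∀ ω, 1 ≤ S ω ∧ S ω ≤ κ)
    (lam : ℝ) (hlam : 0 ≤ lam)
    (y : List 𝒴) (hy : y.length < κ) :
    (∑ γ : 𝒴, cprW p (fun ω => ExtN (y ++ [γ]) (pathOf Y ω)) (fun ω => ExtN y (pathOf Y ω)) *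
        cnodeW p Y S lam (y ++ [γ])) =
      cnodeW p Y S lam y +
        cprW p (fun ω => S ω ≤ y.length) (fun ω => ExtN y (pathOf Y ω)) -
        lam * cprW p (fun ω => S ω = y.length + 1) (fun ω => ExtN y (pathOf Y ω)) ∧
    ((cnodeW p Y S lam y ≤
        ∑ γ : 𝒴, cprW p (fun ω => ExtN (y ++ [γ]) (pathOf Y ω))
            (fun ω => ExtN y (pathOf Y ω)) * cnodeW p Y S lam (y ++ [γ])) ↔
      lam * cprW p (fun ω => S ω = y.length + 1) (fun ω => ExtN y (pathOf Y ω)) ≤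
        cprW p (fun ω => S ω ≤ y.length) (fun ω => ExtN y (pathOf Y ω))) := by
  classical
  obtain ⟨hp0, _⟩ := hp
  set n := y.length with hn
  set B : Ω → Prop := fun ω => ExtN y (pathOf Y ω) with hBdef
  set P : ℝ := prW p B with hPdef
  -- numerators
  set E : ℝ := ∑ ω, if B ω then p ω * posP ((n : ℝ) - S ω) else 0 with hEdef
  set X : ℝ := ∑ ω, if B ω then p ω * posP ((n : ℝ) + 1 - S ω) else 0 with hXdef
  set Q : ℝ := prW p (fun ω => S ω ≤ n ∧ B ω) with hQdef
  set R : ℝ := prW p (fun ω => S ω = n + 1 ∧ B ω) with hRdef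
  set A2 : ℝ := prW p (fun ω => n < S ω ∧ B ω) with hA2def
  set A1 : ℝ := prW p (fun ω => n + 1 < S ω ∧ B ω) with hA1def
  -- each child term as a fraction over P
  have key : ∀ γ : 𝒴,
      cprW p (fun ω => ExtN (y ++ [γ]) (pathOf Y ω)) (fun ω => ExtN y (pathOf Y ω)) *
        cnodeW p Y S lam (y ++ [γ]) =
      ((∑ ω, if ExtN (y ++ [γ]) (pathOf Y ω) then p ω * posP ((n : ℝ) + 1 - S ω) else 0) +
        lam * (∑ ω, if ExtN (y ++ [γ]) (pathOf Y ω) then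
          (if n + 1 < S ω then p ω else 0) else 0)) / P := by
    intro γ
    set Bg : Ω → Prop := fun ω => ExtN (y ++ [γ]) (pathOf Y ω) with hBg
    set Pg : ℝ := prW p Bg with hPg
    set Xg : ℝ := ∑ ω, if Bg ω then p ω * posP ((n : ℝ) + 1 - S ω) else 0 with hXg
    set Ag : ℝ := ∑ ω, if Bg ω then (if n + 1 < S ω then p ω else 0) else 0 with hAg
    have hsub : ∀ ω, Bg ω → B ω := fun ω h => ((extN_append y γ (pathOf Y ω)).1 h).1
    have hcpr : cprW p Bg (fun ω => ExtN y (pathOf Y ω)) = Pg / P := by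
      unfold cprW
      congr 1
      exact prW_congr p _ _ fun ω => ⟨fun h => h.1, fun h => ⟨h, hsub ω h⟩⟩
    have hlen : (y ++ [γ]).length = n + 1 := by simp [hn]
    have hcast : (((y ++ [γ]).length : ℕ) : ℝ) = (n : ℝ) + 1 := by
      rw [hlen]; push_cast; ring
    have e1 : cexW p (fun ω => posP ((((y ++ [γ]).length : ℕ) : ℝ) - (S ω : ℝ))) Bg
        = Xg / Pg := by
      unfold cexW
      congr 1
      rw [hXg]
      exact Finset.sum_congr rfl fun ω _ => by rw [hcast]
    have e2 : cprW p (fun ω => (y ++ [γ]).length < S ω) Bg = Ag / Pg := by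
      unfold cprW
      congr 1
      rw [hAg]
      unfold prW
      refine Finset.sum_congr rfl fun ω _ => ?_
      rw [hlen]
      by_cases h1 : Bg ω <;> by_cases h2 : n + 1 < S ω <;> simp [h1, h2]
    have hcnode : cnodeW p Y S lam (y ++ [γ]) = Xg / Pg + lam * (Ag / Pg) := by
      unfold cnodeW
      rw [← hBg, e1, e2]
    rw [hcpr, hcnode]
    by_cases hPg0 : Pg = 0
    · have hz : ∀ ω, Bg ω → p ω = 0 := prW_zero_on p hp0 Bg hPg0
      have hXg0 : Xg = 0 := by
        rw [hXg]
        refine Finset.sum_eq_zero fun ω _ => ?_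
        by_cases h : Bg ω
        · simp [h, hz ω h]
        · simp [h]
      have hAg0 : Ag = 0 := by
        rw [hAg]
        refine Finset.sum_eq_zero fun ω _ => ?_
        by_cases h : Bg ω
        · simp [h, hz ω h]
        · simp [h]
      simp [hPg0, hXg0, hAg0]
    · have h1 : Xg / Pg + lam * (Ag / Pg) = (Xg + lam * Ag) / Pg := by
        field_simp
      rw [h1, div_mul_div_comm, mul_comm P Pg, mul_div_mul_left _ _ hPg0]
  -- sum the child terms
  set NX : 𝒴 → ℝ := fun γ => ∑ ω, if ExtN (y ++ [γ]) (pathOf Y ω) then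
    p ω * posP ((n : ℝ) + 1 - S ω) else 0 with hNX
  set NA : 𝒴 → ℝ := fun γ => ∑ ω, if ExtN (y ++ [γ]) (pathOf Y ω) then
    (if n + 1 < S ω then p ω else 0) else 0 with hNA
  have hXsum : (∑ γ : 𝒴, NX γ) = X := by
    have hXe : X = ∑ ω, if ExtN y (pathOf Y ω) then p ω * posP ((n : ℝ) + 1 - S ω) else 0 := rfl
    rw [hXe]
    exact sum_children Y y (fun ω => p ω * posP ((n : ℝ) + 1 - S ω))
  have hAsum : (∑ γ : 𝒴, NA γ) = A1 := by
    rw [sum_children Y y (fun ω => if n + 1 < S ω then p ω else 0)]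
    rw [hA1def]
    unfold prW
    refine Finset.sum_congr rfl fun ω _ => ?_
    by_cases h1 : ExtN y (pathOf Y ω) <;> by_cases h2 : n + 1 < S ω <;>
      simp [h1, h2, hBdef]
  have hsum : (∑ γ : 𝒴, cprW p (fun ω => ExtN (y ++ [γ]) (pathOf Y ω))
        (fun ω => ExtN y (pathOf Y ω)) * cnodeW p Y S lam (y ++ [γ])) =
      (X + lam * A1) / P := by
    have h1 : (∑ γ : 𝒴, cprW p (fun ω => ExtN (y ++ [γ]) (pathOf Y ω))
          (fun ω => ExtN y (pathOf Y ω)) * cnodeW p Y S lam (y ++ [γ])) =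
        ∑ γ : 𝒴, (NX γ + lam * NA γ) / P :=
      Finset.sum_congr rfl fun γ _ => key γ
    have h2 : (∑ γ : 𝒴, (NX γ + lam * NA γ) / P) =
        (∑ γ : 𝒴, (NX γ + lam * NA γ)) / P :=
      (Finset.sum_div Finset.univ (fun γ => NX γ + lam * NA γ) P).symm
    rw [h1, h2, Finset.sum_add_distrib, ← Finset.mul_sum, hXsum, hAsum]
  -- identities among numerators
  have hX : X = E + Q := by
    rw [hXdef, hEdef, hQdef]
    unfold prW
    rw [← Finset.sum_add_distrib]
    refine Finset.sum_congr rfl fun ω _ => ?_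
    by_cases hB : B ω
    · simp only [hB, if_true, and_true]
      rcases le_or_gt (S ω) n with h | h
      · have h1 : (S ω : ℝ) ≤ n := by exact_mod_cast h
        rw [if_pos h]
        simp only [posP]
        rw [max_eq_left (by linarith), max_eq_left (by linarith)]
        ring
      · have h1 : (n : ℝ) + 1 ≤ S ω := by exact_mod_cast h
        rw [if_neg (by omega)]
        simp only [posP]
        rw [max_eq_right (by linarith), max_eq_right (by linarith)]
        ring
    · simp [hB]
  have hA : A2 = R + A1 := by
    rw [hA2def, hRdef, hA1def]
    unfold prW
    rw [← Finset.sum_add_distrib]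
    refine Finset.sum_congr rfl fun ω _ => ?_
    by_cases hB : B ω
    · simp only [hB, and_true]
      split_ifs
      all_goals try omega
      all_goals ring
    · simp [hB]
  -- rewrite the node cost and conditional probabilities
  have ey1 : cexW p (fun ω => posP (((y.length : ℕ) : ℝ) - (S ω : ℝ))) B = E / P := by
    unfold cexW
    congr 1
  have ey2 : cprW p (fun ω => y.length < S ω) B = A2 / P := by
    unfold cprW
    congr 1
  have hcnodey : cnodeW p Y S lam y = E / P + lam * (A2 / P) := by
    unfold cnodeW
    rw [← hBdef, ey1, ey2]
  have hq : cprW p (fun ω => S ω ≤ y.length) (fun ω => ExtN y (pathOf Y ω)) = Q / P := by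
    unfold cprW
    rw [hQdef]
  have hr : cprW p (fun ω => S ω = y.length + 1) (fun ω => ExtN y (pathOf Y ω)) = R / P := by
    unfold cprW
    rw [hRdef]
  have ident : (∑ γ : 𝒴, cprW p (fun ω => ExtN (y ++ [γ]) (pathOf Y ω))
        (fun ω => ExtN y (pathOf Y ω)) * cnodeW p Y S lam (y ++ [γ])) =
      cnodeW p Y S lam y +
        cprW p (fun ω => S ω ≤ y.length) (fun ω => ExtN y (pathOf Y ω)) -
        lam * cprW p (fun ω => S ω = y.length + 1) (fun ω => ExtN y (pathOf Y ω)) := by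
    rw [hsum, hcnodey, hq, hr, hX, hA]
    ring
  refine ⟨ident, ?_⟩
  rw [ident]
  constructor <;> intro h <;> linarith
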